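/- arXiv:2101.10088 — 7 statements merged into one kernel-verified Lean document; each statement's English description precedes it below -/
import Mathlib

section
/- For every natural number n ≥ 1, the cofinality of the partial order of countable subsets of ℵ_n under inclusion is ℵ_n; that is, there is a family of ℵ_n countable subsets of ℵ_n such that every countable subset of ℵ_n is contained in some member of the family, and no family of smaller cardinality has this property. -/
/-!
Upper bound, by induction on `n`: embed `A` into the initial ordinal of `ℵ_{n+1}`. Since
`ℵ_{n+1}` is regular and uncountable, every countable subset of `A` lies in one of the
`ℵ_{n+1}` initial segments, each of size at most `ℵ_n`; the union of their cofinal families has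
size `ℵ_{n+1} · ℵ_n = ℵ_{n+1}`. Lower bound: a cofinal family of countable sets covers `A`, so
`|A| ≤ |D| · ℵ₀`, which forces `|D| ≥ ℵ_n` when `n ≥ 1`.
-/

open Cardinal Set

/-- The least cardinality of a family of countably infinite subsets of `A` that is
cofinal in `([A]^{ℵ₀}, ⊆)`. -/
noncomputable def cofCountableSubsets (A : Type*) : Cardinal :=
  sInf { c | ∃ D : Set (Set A), (∀ s ∈ D, s.Countable ∧ s.Infinite) ∧
    (∀ t : Set A, t.Countable → t.Infinite → ∃ s ∈ D, t ⊆ s) ∧ #D = c }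

universe u

structure IsCountableCofinal {A : Type*} (D : Set (Set A)) : Prop where
  countable : ∀ s ∈ D, s.Countable
  cofinal : ∀ t : Set A, t.Countable → ∃ s ∈ D, t ⊆ s

theorem isCountableCofinal_singleton_univ {A : Type*} [Countable A] :
    IsCountableCofinal ({Set.univ} : Set (Set A)) :=
  ⟨fun _ hs => hs ▸ countable_univ, fun t _ => ⟨univ, rfl, subset_univ t⟩⟩

theorem exists_isCountableCofinal_of_forall_countable_subset {ι A : Type u} (S : ι → Set A)
    (hS : ∀ t : Set A, t.Countable → ∃ i, t ⊆ S i) {κ : Cardinal.{u}}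
    (h : ∀ i, ∃ D : Set (Set (S i)), IsCountableCofinal D ∧ #D ≤ κ) :
    ∃ D : Set (Set A), IsCountableCofinal D ∧ #D ≤ #ι * κ := by
  choose D hD hDκ using h
  refine ⟨⋃ i, image Subtype.val '' D i, ⟨?_, fun t ht => ?_⟩, ?_⟩
  · simp only [mem_iUnion, mem_image]
    rintro _ ⟨i, s, hs, rfl⟩
    exact ((hD i).countable s hs).image _
  · obtain ⟨i, hti⟩ := hS t ht
    obtain ⟨s, hs, hts⟩ := (hD i).cofinal _ (ht.preimage Subtype.val_injective)
    exact ⟨Subtype.val '' s, mem_iUnion.2 ⟨i, mem_image_of_mem _ hs⟩,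
      fun a ha => ⟨⟨a, hti ha⟩, hts ha, rfl⟩⟩
  · calc #(⋃ i, image Subtype.val '' D i) ≤ #ι * ⨆ i, #(image Subtype.val '' D i) :=
          mk_iUnion_le _
      _ ≤ #ι * κ := by
          gcongr
          exact ciSup_le' fun i => mk_image_le.trans (hDκ i)

theorem exists_forall_lt_of_mk_lt_cof {α : Type*} [LinearOrder α] {s : Set α}
    (hs : #s < Order.cof α) : ∃ b, ∀ a ∈ s, a < b :=
  not_isCofinal_iff.1 fun h => (Order.cof_le h).not_gt hs

theorem exists_isCountableCofinal_of_mk_le_succ {κ : Cardinal.{u}} (hκ : ℵ₀ ≤ κ)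
    (ih : ∀ B : Type u, #B ≤ κ → ∃ D : Set (Set B), IsCountableCofinal D ∧ #D ≤ κ)
    {A : Type u} (hA : #A ≤ Order.succ κ) :
    ∃ D : Set (Set A), IsCountableCofinal D ∧ #D ≤ Order.succ κ := by
  set ι := (Order.succ κ).ord.ToType
  have hι : #ι = Order.succ κ := mk_ord_toType _
  obtain ⟨f⟩ : Nonempty (A ↪ ι) := by rwa [← Cardinal.le_def, hι]
  have hbounded (t : Set A) (ht : t.Countable) : ∃ β, t ⊆ f ⁻¹' Iio β := by
    have : #(f '' t) < Order.cof ι := by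
      rw [Ordinal.cof_toType, (isRegular_succ hκ).cof_ord]
      exact (ht.image f).le_aleph0.trans_lt (hκ.trans_lt (Order.lt_succ κ))
    obtain ⟨β, hβ⟩ := exists_forall_lt_of_mk_lt_cof this
    exact ⟨β, fun a ha => hβ _ (mem_image_of_mem f ha)⟩
  have hsegment (β : ι) : #(f ⁻¹' Iio β) ≤ κ := by
    refine Order.lt_succ_iff.1 ((mk_preimage_of_injective f _ f.injective).trans_lt ?_)
    simpa only [hι] using mk_Iio_lt β (by rw [hι, Ordinal.type_toType])
  obtain ⟨D, hD, hDcard⟩ := exists_isCountableCofinal_of_forall_countable_subset _ hbounded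
    fun β => ih _ (hsegment β)
  refine ⟨D, hD, hDcard.trans ?_⟩
  calc #ι * κ ≤ Order.succ κ * Order.succ κ := by rw [hι]; gcongr; exact Order.le_succ κ
    _ = Order.succ κ := mul_eq_self (hκ.trans (Order.le_succ κ))

theorem exists_isCountableCofinal_of_mk_le_aleph (n : ℕ) {A : Type u} (hA : #A ≤ ℵ_ n) :
    ∃ D : Set (Set A), IsCountableCofinal D ∧ #D ≤ ℵ_ n := by
  induction n generalizing A with
  | zero =>
    have : Countable A := by simpa [mk_le_aleph0_iff] using hA
    exact ⟨{Set.univ}, isCountableCofinal_singleton_univ, by simp⟩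
  | succ n ih =>
    rw [Nat.cast_succ, ← succ_aleph] at hA ⊢
    exact exists_isCountableCofinal_of_mk_le_succ (aleph0_le_aleph _) (fun _ => ih) hA

theorem mk_le_mul_aleph0_of_sUnion_eq_univ {A : Type u} {D : Set (Set A)}
    (hD : ∀ s ∈ D, s.Countable) (hcover : ⋃₀ D = Set.univ) : #A ≤ #D * ℵ₀ :=
  calc #A = #(⋃₀ D) := by rw [hcover, mk_univ]
    _ ≤ #D * ⨆ s : D, #s := mk_sUnion_le D
    _ ≤ #D * ℵ₀ := by gcongr; exact ciSup_le' fun s => (hD s s.2).le_aleph0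

theorem cofCountableSubsets_le_mk {A : Type u} {D : Set (Set A)}
    (hD : ∀ s ∈ D, s.Countable ∧ s.Infinite)
    (hcof : ∀ t : Set A, t.Countable → t.Infinite → ∃ s ∈ D, t ⊆ s) :
    cofCountableSubsets A ≤ #D :=
  csInf_le' ⟨D, hD, hcof, rfl⟩

theorem exists_mk_eq_cofCountableSubsets (A : Type u) :
    ∃ D : Set (Set A), (∀ s ∈ D, s.Countable ∧ s.Infinite) ∧
      (∀ t : Set A, t.Countable → t.Infinite → ∃ s ∈ D, t ⊆ s) ∧ #D = cofCountableSubsets A :=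
  (csInf_mem ⟨_, {s | s.Countable ∧ s.Infinite}, fun _ hs => hs,
    fun t ht hti => ⟨t, ⟨ht, hti⟩, subset_rfl⟩, rfl⟩ : cofCountableSubsets A ∈ _)

theorem IsCountableCofinal.cofCountableSubsets_le {A : Type u} [Infinite A] {D : Set (Set A)}
    (hD : IsCountableCofinal D) : cofCountableSubsets A ≤ #D := by
  obtain ⟨t₀, -, ht₀c, ht₀i⟩ := (infinite_univ (α := A)).exists_subset_countable_infinite
  refine (cofCountableSubsets_le_mk (D := (· ∪ t₀) '' D) ?_ fun t ht _ => ?_).trans mk_image_le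
  · rintro _ ⟨s, hs, rfl⟩
    exact ⟨(hD.countable s hs).union ht₀c, ht₀i.mono subset_union_right⟩
  · obtain ⟨s, hs, hts⟩ := hD.cofinal t ht
    exact ⟨s ∪ t₀, mem_image_of_mem _ hs, hts.trans subset_union_left⟩

theorem mk_le_cofCountableSubsets_mul_aleph0 (A : Type u) [Infinite A] :
    #A ≤ cofCountableSubsets A * ℵ₀ := by
  obtain ⟨t₀, -, ht₀c, ht₀i⟩ := (infinite_univ (α := A)).exists_subset_countable_infinite
  obtain ⟨D, hD, hcof, hDcard⟩ := exists_mk_eq_cofCountableSubsets A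
  rw [← hDcard]
  refine mk_le_mul_aleph0_of_sUnion_eq_univ (fun s hs => (hD s hs).1)
    (eq_univ_of_forall fun a => ?_)
  obtain ⟨s, hs, hts⟩ := hcof _ (ht₀c.insert a) (ht₀i.mono (subset_insert a t₀))
  exact ⟨s, hs, hts (mem_insert a t₀)⟩

/-- For every `n ≥ 1`, `cf([ℵ_n]^{ℵ₀}, ⊆) = ℵ_n`. -/
theorem cof_countable_subsets_aleph_n (n : ℕ) (hn : 1 ≤ n)
    (A : Type) (hA : #A = Cardinal.aleph n) :
    cofCountableSubsets A = Cardinal.aleph n := by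
  have hlt : ℵ₀ < #A := by rw [hA, ← aleph_zero, aleph_lt_aleph]; exact_mod_cast hn
  have : Infinite A := infinite_iff.2 hlt.le
  obtain ⟨D, hD, hDcard⟩ := exists_isCountableCofinal_of_mk_le_aleph n hA.le
  refine le_antisymm (hD.cofCountableSubsets_le.trans hDcard) ?_
  have hlower := (mk_le_cofCountableSubsets_mul_aleph0 A).trans
    (mul_le_max_of_aleph0_le_right le_rfl)
  exact hA ▸ (le_max_iff.1 hlower).resolve_right hlt.not_ge
end

section
/- If a family F of Polish subspaces covers a completely metrizable space X whose cellularity is an uncountable cardinal κ, then |F| ≥ κ. In particular, if X is a completely metrizable space of weight κ > ℵ₀, then any covering of X by separable subspaces has cardinality at least κ. -/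
open Cardinal Set TopologicalSpace

/-! A covering by `#F` separable subspaces yields a dense set of cardinality at most `#F · ℵ₀`,
by taking the union of countable dense subsets of the members. Disjoint nonempty open sets meet a
dense set in distinct points, and in a metric space the balls of radii `1 / (n + 1)` around the
points of a dense set form a basis; so both the cellularity and the weight are at most
`#F · ℵ₀`, which is `#F` itself once it exceeds `ℵ₀`. -/

universe u

/-- The cellularity of a topological space: the supremum of the cardinalities of
families of pairwise disjoint nonempty open subsets. -/
noncomputable def cellularity (X : Type*) [TopologicalSpace X] : Cardinal :=
  sSup { c | ∃ S : Set (Set X), (∀ U ∈ S, IsOpen U ∧ U.Nonempty) ∧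
    S.PairwiseDisjoint id ∧ #S = c }

/-- The weight of a topological space: the least cardinality of a basis. -/
noncomputable def tweight (X : Type*) [TopologicalSpace X] : Cardinal :=
  sInf { c | ∃ B : Set (Set X), IsTopologicalBasis B ∧ #B = c }

theorem cellularity_le_mk_of_dense {X : Type u} [TopologicalSpace X] {D : Set X} (hD : Dense D) :
    cellularity X ≤ #D := by
  refine csSup_le' ?_
  rintro _ ⟨S, hS, hdisj, rfl⟩
  choose f hfD hfU using fun U : S => hD.exists_mem_open (hS U U.2).1 (hS U U.2).2
  have hf_inj : Function.Injective f := fun U V hUV =>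
    Subtype.ext <| hdisj.elim_set U.2 V.2 (f U) (hfU U) (hUV ▸ hfU V)
  exact mk_le_of_injective (hf_inj.codRestrict hfD)

theorem Dense.isTopologicalBasis_range_ball {X : Type u} [PseudoMetricSpace X] {D : Set X}
    (hD : Dense D) :
    IsTopologicalBasis (range fun p : D × ℕ => Metric.ball (p.1 : X) (1 / (p.2 + 1))) := by
  refine isTopologicalBasis_of_isOpen_of_nhds ?_ fun a U haU hU => ?_
  · rintro _ ⟨p, rfl⟩
    exact Metric.isOpen_ball
  obtain ⟨ε, hε, hball⟩ := Metric.isOpen_iff.1 hU a haU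
  obtain ⟨n, hn⟩ := exists_nat_one_div_lt (half_pos hε)
  obtain ⟨x, hxD, hax⟩ := hD.exists_dist_lt a (Nat.one_div_pos_of_nat (n := n))
  refine ⟨_, ⟨(⟨x, hxD⟩, n), rfl⟩, Metric.mem_ball.2 hax, ?_⟩
  -- `ball x r ⊆ ball a (2 r) ⊆ ball a ε` since `dist x a < r < ε / 2`
  refine (Metric.ball_subset_ball' ?_).trans hball
  rw [dist_comm]
  linarith

theorem tweight_le_mk_mul_aleph0_of_dense {X : Type u} [PseudoMetricSpace X] {D : Set X}
    (hD : Dense D) : tweight X ≤ #D * ℵ₀ :=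
  calc tweight X ≤ #(range fun p : D × ℕ => Metric.ball (p.1 : X) (1 / (p.2 + 1))) :=
        csInf_le (OrderBot.bddBelow _) ⟨_, hD.isTopologicalBasis_range_ball, rfl⟩
    _ ≤ #(D × ℕ) := mk_range_le
    _ = #D * ℵ₀ := by simp

theorem exists_dense_mk_le_mul_aleph0_of_sUnion_eq_univ {X : Type u} [TopologicalSpace X]
    {F : Set (Set X)} (hF : ∀ Y ∈ F, SeparableSpace Y) (hcov : ⋃₀ F = Set.univ) :
    ∃ D : Set X, Dense D ∧ #D ≤ #F * ℵ₀ := by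
  choose c hc hYc using fun Y : F => haveI := hF Y Y.2; IsSeparable.of_subtype (Y : Set X)
  refine ⟨⋃ Y : F, c Y, fun x => ?_, ?_⟩
  · obtain ⟨Y, hY, hxY⟩ := hcov.symm ▸ mem_univ x
    exact closure_mono (subset_iUnion c ⟨Y, hY⟩) (hYc ⟨Y, hY⟩ hxY)
  · calc #(⋃ Y : F, c Y) ≤ #F * ⨆ Y : F, #(c Y) := mk_iUnion_le c
      _ ≤ #F * ℵ₀ := by
        gcongr
        exact ciSup_le' fun Y => mk_le_aleph0_iff.2 (hc Y).to_subtype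

theorem Cardinal.le_of_le_mul_aleph0 {κ a : Cardinal} (hκ : ℵ₀ < κ) (h : κ ≤ a * ℵ₀) : κ ≤ a := by
  rcases le_or_gt ℵ₀ a with ha | ha
  · rwa [mul_aleph0_eq ha] at h
  · have : a * ℵ₀ ≤ ℵ₀ := by simpa only [aleph0_mul_aleph0] using mul_le_mul_left ha.le ℵ₀
    exact absurd (h.trans this) hκ.not_ge

/-- If a family of Polish subspaces covers a completely metrizable space whose
cellularity is an uncountable cardinal `κ`, then the family has cardinality at
least `κ`.  In particular, for a completely metrizable space of uncountable
weight `κ`, every covering by separable subspaces has cardinality at least `κ`. -/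
theorem cov_ge_cellularity :
    (∀ (X : Type) (_ : MetricSpace X) (_ : CompleteSpace X) (κ : Cardinal), ℵ₀ < κ →
      cellularity X = κ → ∀ F : Set (Set X), (∀ Y ∈ F, PolishSpace Y) →
        ⋃₀ F = Set.univ → κ ≤ #F) ∧
    (∀ (X : Type) (_ : MetricSpace X) (_ : CompleteSpace X) (κ : Cardinal), ℵ₀ < κ →
      tweight X = κ → ∀ F : Set (Set X), (∀ Y ∈ F, SeparableSpace Y) →
        ⋃₀ F = Set.univ → κ ≤ #F) := by
  constructor
  · rintro X _ _ κ hκ rfl F hF hcov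
    have hsep : ∀ Y ∈ F, SeparableSpace Y := fun Y hY => haveI := hF Y hY; inferInstance
    obtain ⟨D, hD, hDF⟩ := exists_dense_mk_le_mul_aleph0_of_sUnion_eq_univ hsep hcov
    exact le_of_le_mul_aleph0 hκ ((cellularity_le_mk_of_dense hD).trans hDF)
  · rintro X _ _ κ hκ rfl F hF hcov
    obtain ⟨D, hD, hDF⟩ := exists_dense_mk_le_mul_aleph0_of_sUnion_eq_univ hF hcov
    refine le_of_le_mul_aleph0 hκ ((tweight_le_mk_mul_aleph0_of_dense hD).trans ?_)
    calc #D * ℵ₀ ≤ #F * ℵ₀ * ℵ₀ := by gcongr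
      _ = #F * ℵ₀ := by rw [mul_assoc, aleph0_mul_aleph0]
end

section
/- Let X be a metrizable space and B a basis for X such that every point of X lies in only countably many members of B. For each countable A ⊆ B, the set Y_A = {x ∈ X : every member of B containing x belongs to A} is a closed, second countable subspace of X, and the family {Y_A : A ∈ D} covers X whenever D is cofinal in the countable subsets of B under inclusion. -/
open Set TopologicalSpace

/-! A point lies in `Y_A = basisPiece B A` exactly when every basic set containing it is
in `A`. So the complement of `Y_A` is the union of the basic open sets outside `A`, and on
`Y_A` every basic set outside `A` traces to `∅`, leaving the countably many traces of
members of `A` as a basis. Point-countability makes `{U ∈ B | x ∈ U}` one of the countable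
sets that a cofinal family must dominate, which puts `x` in some `Y_A`. -/

section

variable {X : Type*}

def basisPiece (B A : Set (Set X)) : Set X := {x | {U ∈ B | x ∈ U} ⊆ A}

theorem compl_basisPiece (B A : Set (Set X)) : (basisPiece B A)ᶜ = ⋃ U ∈ B \ A, U := by
  ext x
  simp only [basisPiece, mem_compl_iff, mem_ofPred_eq, not_subset, mem_iUnion, mem_sdiff,
    exists_prop]
  grind

theorem iUnion_basisPiece_eq_univ {B : Set (Set X)} (hpc : ∀ x : X, {U ∈ B | x ∈ U}.Countable)
    {D : Set (Set (Set X))} (hD : ∀ A ⊆ B, A.Countable → ∃ A' ∈ D, A ⊆ A') :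
    ⋃ A ∈ D, basisPiece B A = univ := by
  refine eq_univ_of_forall fun x => mem_iUnion₂.2 ?_
  obtain ⟨A, hAD, hxA⟩ := hD {U ∈ B | x ∈ U} (fun U hU => hU.1) (hpc x)
  exact ⟨A, hAD, hxA⟩

theorem preimage_val_basisPiece_eq_empty {B A : Set (Set X)} {U : Set X} (hUB : U ∈ B)
    (hUA : U ∉ A) : ((↑) : basisPiece B A → X) ⁻¹' U = ∅ :=
  eq_empty_of_forall_notMem fun y hyU => hUA (y.2 ⟨hUB, hyU⟩)

variable [TopologicalSpace X]

theorem isClosed_basisPiece {B : Set (Set X)} (hB : ∀ U ∈ B, IsOpen U) (A : Set (Set X)) :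
    IsClosed (basisPiece B A) := by
  rw [← isOpen_compl_iff, compl_basisPiece]
  exact isOpen_biUnion fun U hU => hB U hU.1

theorem secondCountableTopology_basisPiece {B A : Set (Set X)} (hB : IsTopologicalBasis B)
    (hA : A.Countable) : SecondCountableTopology (basisPiece B A) := by
  have hbasis := hB.isInducing (f := ((↑) : basisPiece B A → X)) .subtypeVal
  refine hbasis.secondCountableTopology (((hA.image (preimage (↑))).insert ∅).mono ?_)
  rintro _ ⟨U, hUB, rfl⟩
  by_cases hUA : U ∈ A
  · exact mem_insert_of_mem _ (mem_image_of_mem _ hUA)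
  · exact preimage_val_basisPiece_eq_empty hUB hUA ▸ mem_insert _ _

end

theorem closed_second_countable_pieces_general (X : Type) [TopologicalSpace X]
    (B : Set (Set X)) (hB : IsTopologicalBasis B)
    (hpc : ∀ x : X, {U ∈ B | x ∈ U}.Countable) :
    (∀ A : Set (Set X), A ⊆ B → A.Countable →
      IsClosed {x : X | {U ∈ B | x ∈ U} ⊆ A} ∧
      SecondCountableTopology {x : X | {U ∈ B | x ∈ U} ⊆ A}) ∧
    (∀ D : Set (Set (Set X)), (∀ A ∈ D, A ⊆ B ∧ A.Countable) →
      (∀ A : Set (Set X), A ⊆ B → A.Countable → ∃ A' ∈ D, A ⊆ A') →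
      ⋃ A ∈ D, {x : X | {U ∈ B | x ∈ U} ⊆ A} = Set.univ) :=
  ⟨fun A _ hA => ⟨isClosed_basisPiece (fun _ => hB.isOpen) A,
      secondCountableTopology_basisPiece hB hA⟩,
    fun _ _ hcof => iUnion_basisPiece_eq_univ hpc hcof⟩

/-- Given a point-countable basis `B` of a metrizable space `X` and a countable
`A ⊆ B`, the set `Y_A = {x : {U ∈ B | x ∈ U} ⊆ A}` is a closed, second countable
subspace, and the `Y_A` for `A` ranging over a cofinal family of countable subsets
of `B` cover `X`. -/
theorem closed_second_countable_pieces (X : Type) [TopologicalSpace X]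
    [MetrizableSpace X] (B : Set (Set X)) (hB : IsTopologicalBasis B)
    (hpc : ∀ x : X, {U ∈ B | x ∈ U}.Countable) :
    (∀ A : Set (Set X), A ⊆ B → A.Countable →
      IsClosed {x : X | {U ∈ B | x ∈ U} ⊆ A} ∧
      SecondCountableTopology {x : X | {U ∈ B | x ∈ U} ⊆ A}) ∧
    (∀ D : Set (Set (Set X)), (∀ A ∈ D, A ⊆ B ∧ A.Countable) →
      (∀ A : Set (Set X), A ⊆ B → A.Countable → ∃ A' ∈ D, A ⊆ A') →
      ⋃ A ∈ D, {x : X | {U ∈ B | x ∈ U} ⊆ A} = Set.univ) :=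
  closed_second_countable_pieces_general X B hB hpc
end

section
/- Let κ be a cardinal with uncountable cofinality and let X be a completely metrizable space of weight κ. Then X can be partitioned into at most κ completely metrizable subspaces, each of weight strictly less than κ. -/
open Cardinal Set TopologicalSpace

/-!
Enumerate a dense set of size at most `κ` as `(d b)_{b < κ}` and let `F a` be the closure of
`{d b | b < a}`. These closed sets increase, and since `κ` has uncountable cofinality every
sequence of indices is bounded, so every point lies in some `F a`; hence the layers
`F a \ ⋃_{b < a} F b` partition `X`. A layer lies in the closure of fewer than `κ` points, so its
weight is `< κ`, and it is `G_δ` because `⋃_{b < a} F b` is a countable union of closed sets when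
`a` has countable cofinality and is itself closed otherwise.
-/

theorem Order.exists_forall_lt_of_countable {ι : Type*} [LinearOrder ι] (hcof : ℵ₀ < Order.cof ι)
    {s : Set ι} (hs : s.Countable) : ∃ a, ∀ b ∈ s, b < a := by
  by_contra! h
  exact (hcof.trans_le ((Order.cof_le h).trans hs.le_aleph0)).false

theorem tweight_le_mk_of_isTopologicalBasis {X : Type*} [TopologicalSpace X] {B : Set (Set X)}
    (hB : IsTopologicalBasis B) : tweight X ≤ #B :=
  csInf_le' ⟨B, hB, rfl⟩

theorem exists_isTopologicalBasis_mk_eq_tweight (X : Type*) [TopologicalSpace X] :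
    ∃ B : Set (Set X), IsTopologicalBasis B ∧ #B = tweight X :=
  csInf_mem (s := { c | ∃ B : Set (Set X), IsTopologicalBasis B ∧ #B = c })
    ⟨_, _, isTopologicalBasis_opens, rfl⟩

theorem exists_dense_mk_le_tweight (X : Type*) [TopologicalSpace X] :
    ∃ D : Set X, Dense D ∧ #D ≤ tweight X := by
  obtain ⟨B, hB, hBw⟩ := exists_isTopologicalBasis_mk_eq_tweight X
  let pt : {U : B // (U : Set X).Nonempty} → X := fun U => U.2.some
  refine ⟨range pt, hB.dense_iff.2 fun U hU hne =>
    ⟨pt ⟨⟨U, hU⟩, hne⟩, hne.some_mem, mem_range_self _⟩, ?_⟩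
  calc #(range pt) ≤ #{U : B // (U : Set X).Nonempty} := mk_range_le
    _ ≤ #B := mk_subtype_le _
    _ = tweight X := hBw

theorem tweight_le_of_subset_closure {X : Type*} [PseudoMetricSpace X] {Y S : Set X}
    (hY : Y ⊆ closure S) : tweight Y ≤ max #S ℵ₀ := by
  let ball : S × ℕ → Set Y := fun p => {y | dist (y : X) p.1 < 1 / (p.2 + 1)}
  have hbasis : IsTopologicalBasis (range ball) := by
    refine isTopologicalBasis_of_isOpen_of_nhds ?_ fun a U ha hU => ?_
    · rintro _ ⟨p, rfl⟩
      exact Metric.isOpen_ball.preimage continuous_subtype_val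
    obtain ⟨ε, hε, hεU⟩ := Metric.isOpen_iff.1 hU a ha
    obtain ⟨n, hn⟩ := exists_nat_one_div_lt (half_pos hε)
    obtain ⟨s, hs, has⟩ := Metric.mem_closure_iff.1 (hY a.2) _ (Nat.one_div_pos_of_nat (n := n))
    refine ⟨ball (⟨s, hs⟩, n), mem_range_self _, by simpa [ball, dist_comm] using has,
      fun y hy => hεU ?_⟩
    calc dist (y : X) a ≤ dist (y : X) s + dist (a : X) s := dist_triangle_right _ _ _
      _ < ε / 2 + ε / 2 := add_lt_add (hy.trans hn) (by simpa using has.trans hn)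
      _ = ε := add_halves ε
  calc tweight Y ≤ #(range ball) := tweight_le_mk_of_isTopologicalBasis hbasis
    _ ≤ #(S × ℕ) := mk_range_le
    _ = #S * ℵ₀ := by simp
    _ ≤ max #S ℵ₀ := by simpa using mul_le_max #S ℵ₀

section Layers

variable {α ι : Type*} [LinearOrder ι]

def transfiniteDisjointed (F : ι → Set α) (i : ι) : Set α :=
  F i \ ⋃ j < i, F j

theorem pairwiseDisjoint_range_transfiniteDisjointed (F : ι → Set α) :
    (range (transfiniteDisjointed F)).PairwiseDisjoint id := by
  rintro _ ⟨i, rfl⟩ _ ⟨j, rfl⟩ hij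
  refine disjoint_left.2 fun x hi hj => ?_
  rcases lt_trichotomy i j with h | rfl | h
  · exact hj.2 (mem_biUnion h hi.1)
  · exact hij rfl
  · exact hi.2 (mem_biUnion h hj.1)

theorem sUnion_range_transfiniteDisjointed [WellFoundedLT ι] (F : ι → Set α) :
    ⋃₀ range (transfiniteDisjointed F) = ⋃ i, F i := by
  refine subset_antisymm (sUnion_subset ?_) fun x hx => ?_
  · rintro _ ⟨i, rfl⟩
    exact sdiff_subset.trans (subset_iUnion F i)
  obtain ⟨i, hi, hmin⟩ := wellFounded_lt.has_min {i | x ∈ F i} (mem_iUnion.1 hx)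
  refine ⟨_, mem_range_self i, hi, fun hlt => ?_⟩
  obtain ⟨j, hj, hxj⟩ := mem_iUnion₂.1 hlt
  exact hmin j hxj hj

end Layers

section MonotoneClosed

variable {X ι : Type*} [TopologicalSpace X] [SequentialSpace X] [LinearOrder ι]
  {F : ι → Set X}

theorem isClosed_biUnion_of_monotone (hF : Monotone F) (hFc : ∀ i, IsClosed (F i)) {s : Set ι}
    (hs : ∀ c ⊆ s, c.Countable → ∃ j ∈ s, ∀ i ∈ c, i ≤ j) : IsClosed (⋃ i ∈ s, F i) := by
  refine IsSeqClosed.isClosed fun x p hx hlim => ?_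
  choose i his hxi using fun n => mem_iUnion₂.1 (hx n)
  obtain ⟨j, hjs, hj⟩ := hs (range i) (range_subset_iff.2 his) (countable_range i)
  have hxj (n : ℕ) : x n ∈ F j := hF (hj _ (mem_range_self n)) (hxi n)
  exact mem_biUnion hjs ((hFc j).mem_of_tendsto hlim (.of_forall hxj))

/-- Either `s` has a countable cofinal subset, and the union is a countable union of closed sets,
or every countable subset of `s` is bounded in `s`, and the union is closed. -/
theorem isGδ_compl_biUnion_of_monotone (hF : Monotone F) (hFc : ∀ i, IsClosed (F i))
    (s : Set ι) : IsGδ (⋃ i ∈ s, F i)ᶜ := by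
  by_cases hcof : ∃ c ⊆ s, c.Countable ∧ IsCofinalFor s c
  · obtain ⟨c, hcs, hc, hsc⟩ := hcof
    have hunion : ⋃ i ∈ s, F i = ⋃ i ∈ c, F i := by
      refine subset_antisymm (iUnion₂_subset fun i hi => ?_) (biUnion_subset_biUnion_left hcs)
      obtain ⟨j, hjc, hij⟩ := hsc hi
      exact (hF hij).trans (subset_biUnion_of_mem hjc)
    rw [hunion, compl_iUnion₂]
    exact .biInter_of_isOpen hc fun i _ => (hFc i).isOpen_compl
  · refine (isClosed_biUnion_of_monotone hF hFc fun c hcs hc => ?_).isOpen_compl.isGδ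
    by_contra! hbdd
    exact hcof ⟨c, hcs, hc, fun i hi => (hbdd i hi).imp fun _ h => ⟨h.1, h.2.le⟩⟩

end MonotoneClosed

theorem exists_mem_closure_image_preimage_Iio {X ι : Type*} [TopologicalSpace X]
    [FrechetUrysohnSpace X] [LinearOrder ι] (hcof : ℵ₀ < Order.cof ι) {D : Set X} (g : D → ι)
    {x : X} (hx : x ∈ closure D) : ∃ a, x ∈ closure (Subtype.val '' (g ⁻¹' Iio a)) := by
  obtain ⟨u, hu, hlim⟩ := mem_closure_iff_seq_limit.1 hx
  obtain ⟨a, ha⟩ :=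
    Order.exists_forall_lt_of_countable hcof (countable_range fun n => g ⟨u n, hu n⟩)
  exact ⟨a, mem_closure_of_tendsto hlim (.of_forall fun n => ⟨⟨u n, hu n⟩, ha _ ⟨n, rfl⟩, rfl⟩)⟩

theorem partition_into_smaller_weight_general (κ : Cardinal) (hcf : ℵ₀ < κ.ord.cof)
    (X : Type) [MetricSpace X] (hw : tweight X = κ) :
    ∃ P : Set (Set X), P.PairwiseDisjoint id ∧ ⋃₀ P = Set.univ ∧ #P ≤ κ ∧
      ∀ Y ∈ P, IsGδ Y ∧ tweight Y < κ := by
  have hκ : ℵ₀ < κ := hcf.trans_le (Ordinal.cof_ord_le κ)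
  obtain ⟨D, hD, hDκ⟩ := exists_dense_mk_le_tweight X
  obtain ⟨g⟩ : Nonempty (D ↪ κ.ord.ToType) := by rwa [← le_def, mk_ord_toType, ← hw]
  let F : κ.ord.ToType → Set X := fun a => closure (Subtype.val '' (g ⁻¹' Iio a))
  have hF : Monotone F := fun a b hab =>
    closure_mono (image_mono (preimage_mono (Iio_subset_Iio hab)))
  refine ⟨range (transfiniteDisjointed F), pairwiseDisjoint_range_transfiniteDisjointed F, ?_,
    mk_range_le.trans (mk_ord_toType κ).le, ?_⟩
  · rw [sUnion_range_transfiniteDisjointed, eq_univ_iff_forall]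
    intro x
    simpa using exists_mem_closure_image_preimage_Iio (by rwa [Ordinal.cof_toType]) g (hD x)
  rintro _ ⟨a, rfl⟩
  refine ⟨isClosed_closure.isGδ.inter
      (isGδ_compl_biUnion_of_monotone hF (fun _ => isClosed_closure) _),
    (tweight_le_of_subset_closure sdiff_subset).trans_lt (max_lt ?_ hκ)⟩
  calc #(Subtype.val '' (g ⁻¹' Iio a)) ≤ #(g ⁻¹' Iio a) := mk_image_le
    _ ≤ #(Iio a) := mk_preimage_of_injective _ _ g.injective
    _ < κ := by simpa using mk_Iio_lt a

/-- If `κ` has uncountable cofinality and `X` is a completely metrizable space of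
weight `κ`, then `X` can be partitioned into at most `κ` completely metrizable
(equivalently, `G_δ`) subspaces, each of weight `< κ`. -/
theorem partition_into_smaller_weight (κ : Cardinal) (hcf : ℵ₀ < κ.ord.cof)
    (X : Type) [MetricSpace X] [CompleteSpace X] (hw : tweight X = κ) :
    ∃ P : Set (Set X), P.PairwiseDisjoint id ∧ ⋃₀ P = Set.univ ∧ #P ≤ κ ∧
      ∀ Y ∈ P, IsGδ Y ∧ tweight Y < κ :=
  partition_into_smaller_weight_general κ hcf X hw
end

section
/- If the continuum 𝔠 satisfies 𝔠 < ℵ_{ω+1}, then for every completely metrizable space X, the minimal cardinality of a covering of X by Polish spaces equals the minimal cardinality of a partition of X into Polish spaces. -/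
/-!
Every partition is a cover, so `cov(X) ≤ par(X)`. Conversely let `κ = cov(X)`. If `κ > 𝔠`, then
`|X| ≤ κ · 𝔠 = κ` and `X` is partitioned into its points. If `κ ≤ ℵ₀`, then `X` is separable,
hence Polish. Otherwise, since `𝔠 ≠ ℵ_ω` by König's theorem, `κ = ℵ_n` for a finite `n`, and `X`
has a dense set `D` of size `ℵ_n`.

By induction on `n`, every `Gδ` set `A ⊆ cl D` with `|D| ≤ ℵ_n` is a union of `ℵ_n` disjoint
Polish pieces. For `|D| ≤ ℵ_{n+1}`, index `D` injectively by `ω_{n+1}`, let `D_i` be the points of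
index below `i`, and cut `A` into the layers `A ∩ (cl D_i \ ⋃_{j<i} cl D_j)`. They cover `A`
because `ω_{n+1}` has uncountable cofinality; a layer is empty unless `i` has countable
cofinality, and then it is `Gδ`. It lies in `cl D_i` with `|D_i| ≤ ℵ_n`, so the induction
hypothesis splits it further.
-/

open Cardinal Set

/-- The least cardinality of a covering of `X` by Polish subspaces. -/
noncomputable def covPolish (X : Type u) [TopologicalSpace X] : Cardinal.{u} :=
  sInf { c | ∃ F : Set (Set X), (∀ Y ∈ F, PolishSpace Y) ∧ ⋃₀ F = Set.univ ∧ #F = c }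

/-- The least cardinality of a partition of `X` into Polish subspaces. -/
noncomputable def parPolish (X : Type u) [TopologicalSpace X] : Cardinal.{u} :=
  sInf { c | ∃ P : Set (Set X), (∀ Y ∈ P, PolishSpace Y) ∧ P.PairwiseDisjoint id ∧
    ⋃₀ P = Set.univ ∧ #P = c }

open TopologicalSpace Topology
open scoped Ordinal

theorem IsOpen.isCompletelyMetrizableSpace {X : Type*} [TopologicalSpace X]
    [IsCompletelyMetrizableSpace X] {s : Set X} (hs : IsOpen s) :
    IsCompletelyMetrizableSpace s := by
  let := upgradeIsCompletelyMetrizable X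
  lift s to Opens X using hs
  exact inferInstanceAs (IsCompletelyMetrizableSpace s.CompleteCopy)

theorem IsGδ.isCompletelyMetrizableSpace {X : Type*} [TopologicalSpace X]
    [IsCompletelyMetrizableSpace X] {s : Set X} (hs : IsGδ s) :
    IsCompletelyMetrizableSpace s := by
  obtain ⟨T, hTo, hTc, rfl⟩ := hs
  have : Countable T := hTc.to_subtype
  have : ∀ t : T, IsCompletelyMetrizableSpace t := fun t ↦
    (hTo t t.2).isCompletelyMetrizableSpace
  let f : ⋂₀ T → X × ∀ t : T, (t : Set X) := fun x ↦ (x, fun t ↦ ⟨x, x.2 t t.2⟩)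
  have hrange : range f = ⋂ t, {p | (p.2 t : X) = p.1} := by
    ext ⟨x, g⟩
    simp only [mem_iInter, mem_ofPred_eq]
    refine ⟨?_, fun h ↦ ?_⟩
    · rintro ⟨y, hy⟩ t
      simp only [f, Prod.mk.injEq] at hy
      rw [← hy.1, ← hy.2]
    · refine ⟨⟨x, fun t ht ↦ h ⟨t, ht⟩ ▸ (g ⟨t, ht⟩).2⟩, ?_⟩
      ext t
      · rfl
      · exact (h t).symm
  refine IsClosedEmbedding.IsCompletelyMetrizableSpace (f := f) ⟨?_, ?_⟩
  · exact .of_comp (by fun_prop) continuous_fst IsEmbedding.subtypeVal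
  · rw [hrange]
    exact isClosed_iInter fun t ↦ isClosed_eq (by fun_prop) continuous_fst

theorem IsGδ.polishSpace_of_isSeparable {X : Type*} [TopologicalSpace X]
    [IsCompletelyMetrizableSpace X] {s : Set X} (hs : IsGδ s) (h's : IsSeparable s) :
    PolishSpace s :=
  have := hs.isCompletelyMetrizableSpace
  have := h's.separableSpace
  inferInstance

theorem PolishSpace.mk_le_continuum (X : Type*) [TopologicalSpace X] [PolishSpace X] :
    #X ≤ 𝔠 := by
  cases isEmpty_or_nonempty X
  · simp
  obtain ⟨f, -, hf⟩ := exists_nat_nat_continuous_surjective X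
  simpa using lift_mk_le_lift_mk_of_surjective hf

theorem Cardinal.continuum_ne_aleph_omega0 : 𝔠 ≠ ℵ_ ω := by
  intro h
  have := lt_cof_ord_power le_rfl one_lt_two (a := ℵ₀)
  rw [two_power_aleph0, h, ord_aleph, Ordinal.cof_omega Ordinal.isSuccLimit_omega0,
    Ordinal.cof_omega0] at this
  exact this.false

theorem Cardinal.exists_nat_eq_aleph_of_lt_aleph_omega0 {c : Cardinal} (h₀ : ℵ₀ ≤ c)
    (h : c < ℵ_ ω) :
    ∃ n : ℕ, c = ℵ_ n := by
  obtain ⟨o, rfl⟩ := mem_range_aleph_iff.2 h₀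
  obtain ⟨n, rfl⟩ := Ordinal.lt_omega0.1 (aleph_lt_aleph.1 h)
  exact ⟨n, rfl⟩

theorem exists_countable_subset_mem_closure {X : Type*} [TopologicalSpace X]
    [FrechetUrysohnSpace X] {s : Set X} {x : X} (hx : x ∈ closure s) :
    ∃ c ⊆ s, c.Countable ∧ x ∈ closure c := by
  obtain ⟨u, hu, hux⟩ := mem_closure_iff_seq_limit.1 hx
  exact ⟨range u, range_subset_iff.2 hu, countable_range u,
    mem_closure_of_tendsto hux (.of_forall mem_range_self)⟩

theorem Set.pairwise_disjoint_diff_biUnion_lt {ι α : Type*} [LinearOrder ι] (f : ι → Set α) :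
    Pairwise (Function.onFun Disjoint fun i ↦ f i \ ⋃ j < i, f j) := by
  intro i j hij
  rcases hij.lt_or_gt with h | h
  · exact disjoint_left.2 fun x hi hj ↦ hj.2 (mem_biUnion h hi.1)
  · exact disjoint_left.2 fun x hi hj ↦ hi.2 (mem_biUnion h hj.1)

theorem Set.iUnion_diff_biUnion_lt {ι α : Type*} [LinearOrder ι] [WellFoundedLT ι]
    (f : ι → Set α) : ⋃ i, (f i \ ⋃ j < i, f j) = ⋃ i, f i := by
  refine subset_antisymm (iUnion_mono fun i ↦ sdiff_subset) fun x hx ↦ ?_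
  obtain ⟨i, hi, hmin⟩ := WellFounded.has_min wellFounded_lt {i | x ∈ f i} (mem_iUnion.1 hx)
  exact mem_iUnion.2 ⟨i, hi, by simpa using fun j hj hxj ↦ hmin j hxj hj⟩

section OrdinalIndex

variable {o : Ordinal}

theorem exists_forall_lt_of_countable_toType_aleph_add_one {s : Set (ℵ_ (o + 1)).ord.ToType}
    (hs : s.Countable) : ∃ i, ∀ j ∈ s, j < i := by
  have hcof : ℵ₀ < Order.cof (ℵ_ (o + 1)).ord.ToType := by
    rw [Ordinal.cof_toType, (isRegular_aleph_add_one o).cof_ord]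
    exact aleph0_lt_aleph_one.trans_le (aleph_le_aleph.2 (by simp))
  have : ¬ IsCofinal s := fun h ↦ ((Order.cof_le h).trans hs.le_aleph0).not_gt hcof
  simpa [IsCofinal] using this

theorem mk_Iio_toType_aleph_add_one_le (i : (ℵ_ (o + 1)).ord.ToType) : #(Iio i) ≤ ℵ_ o := by
  rw [← Order.lt_succ_iff, succ_aleph]
  simpa using mk_Iio_lt i (by simp)

end OrdinalIndex

section Layers

variable {X ι : Type*} [TopologicalSpace X] [LinearOrder ι] (D : Set X) (e : X → ι)

theorem closure_subset_iUnion_closure_sep_lt [FrechetUrysohnSpace X]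
    (hι : ∀ s : Set ι, s.Countable → ∃ i, ∀ j ∈ s, j < i) :
    closure D ⊆ ⋃ i, closure {x ∈ D | e x < i} := by
  intro x hx
  obtain ⟨c, hcD, hc, hxc⟩ := exists_countable_subset_mem_closure hx
  obtain ⟨i, hi⟩ := hι (e '' c) (hc.image e)
  have hci : c ⊆ {x ∈ D | e x < i} := fun y hy ↦ ⟨hcD hy, hi _ (mem_image_of_mem e hy)⟩
  exact mem_iUnion.2 ⟨i, closure_mono hci hxc⟩

theorem isGδ_closure_sep_lt_diff [PseudoMetrizableSpace X] (i : ι) :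
    IsGδ (closure {x ∈ D | e x < i} \ ⋃ j < i, closure {x ∈ D | e x < j}) := by
  set C : ι → Set X := fun j ↦ closure {x ∈ D | e x < j}
  have hC : Monotone C := fun j k hjk ↦
    closure_mono fun x hx ↦ ⟨hx.1, hx.2.trans_le hjk⟩
  by_cases hcof : ∃ s ⊆ Iio i, s.Countable ∧ ∀ j < i, ∃ k ∈ s, j ≤ k
  · obtain ⟨s, hsi, hs, hcofinal⟩ := hcof
    have : ⋃ j < i, C j = ⋃ k ∈ s, C k := by
      refine subset_antisymm (iUnion₂_subset fun j hj ↦ ?_) (biUnion_mono hsi fun _ _ ↦ le_rfl)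
      obtain ⟨k, hks, hjk⟩ := hcofinal j hj
      exact (hC hjk).trans (subset_biUnion_of_mem hks)
    rw [this, sdiff_eq, compl_iUnion₂]
    exact isClosed_closure.isGδ.inter
      (.biInter_of_isOpen hs fun k _ ↦ isClosed_closure.isOpen_compl)
  · -- a countable set of indices below `i` is bounded below `i`, so `C i = ⋃ j < i, C j`
    convert IsGδ.empty
    refine sdiff_eq_empty.2 fun x hx ↦ ?_
    obtain ⟨c, hcD, hc, hxc⟩ := exists_countable_subset_mem_closure hx
    push Not at hcof
    obtain ⟨j, hji, hj⟩ := hcof (e '' c) (image_subset_iff.2 fun y hy ↦ (hcD hy).2) (hc.image e)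
    have hcj : c ⊆ {x ∈ D | e x < j} := fun y hy ↦ ⟨(hcD hy).1, hj _ (mem_image_of_mem e hy)⟩
    exact mem_biUnion hji (closure_mono hcj hxc)

end Layers

section Partition

variable {X : Type*} [TopologicalSpace X]

def IsPolishPartition (P : Set (Set X)) (A : Set X) : Prop :=
  (∀ Y ∈ P, PolishSpace Y) ∧ P.PairwiseDisjoint id ∧ ⋃₀ P = A

theorem isPolishPartition_singleton {A : Set X} [PolishSpace A] : IsPolishPartition {A} A :=
  ⟨by simpa, pairwiseDisjoint_singleton _ _, sUnion_singleton A⟩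

theorem isPolishPartition_range_singleton :
    IsPolishPartition (range (singleton : X → Set X)) univ := by
  refine ⟨?_, ?_, by rw [sUnion_range, iUnion_of_singleton]⟩
  · rintro _ ⟨x, rfl⟩
    infer_instance
  · rintro _ ⟨x, rfl⟩ _ ⟨y, rfl⟩ hxy
    exact disjoint_singleton.2 fun h ↦ hxy (h ▸ rfl)

theorem Pairwise.isPolishPartition_iUnion {ι : Type*} {A : ι → Set X}
    (hA : Pairwise (Function.onFun Disjoint A))
    {P : ι → Set (Set X)} (hP : ∀ i, IsPolishPartition (P i) (A i)) :
    IsPolishPartition (⋃ i, P i) (⋃ i, A i) := by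
  refine ⟨fun Y hY ↦ ?_, fun Y hY Z hZ hYZ ↦ ?_, ?_⟩
  · obtain ⟨i, hi⟩ := mem_iUnion.1 hY
    exact (hP i).1 Y hi
  · obtain ⟨i, hi⟩ := mem_iUnion.1 hY
    obtain ⟨j, hj⟩ := mem_iUnion.1 hZ
    rcases eq_or_ne i j with rfl | hij
    · exact (hP i).2.1 hi hj hYZ
    · refine (hA hij).mono ?_ ?_
      · exact (hP i).2.2 ▸ subset_sUnion_of_mem hi
      · exact (hP j).2.2 ▸ subset_sUnion_of_mem hj
  · rw [sUnion_iUnion]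
    exact iUnion_congr fun i ↦ (hP i).2.2

theorem parPolish_le {P : Set (Set X)} (hP : IsPolishPartition P univ) : parPolish X ≤ #P :=
  csInf_le' ⟨P, hP.1, hP.2.1, hP.2.2, rfl⟩

theorem parPolish_le_mk : parPolish X ≤ #X :=
  (parPolish_le isPolishPartition_range_singleton).trans mk_range_le

theorem covPolish_le_parPolish : covPolish X ≤ parPolish X := by
  obtain ⟨hpol, hdisj, hunion⟩ := isPolishPartition_range_singleton (X := X)
  exact le_csInf ⟨_, _, hpol, hdisj, hunion, rfl⟩
    fun _ ⟨P, hP, _, hPX, hPc⟩ ↦ csInf_le' ⟨P, hP, hPX, hPc⟩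

theorem exists_polish_cover_mk_eq_covPolish :
    ∃ F : Set (Set X), (∀ Y ∈ F, PolishSpace Y) ∧ ⋃₀ F = Set.univ ∧ #F = covPolish X :=
  csInf_mem (s := {c | ∃ F : Set (Set X), (∀ Y ∈ F, PolishSpace Y) ∧ ⋃₀ F = Set.univ ∧ #F = c})
    ⟨_, _, isPolishPartition_range_singleton.1, isPolishPartition_range_singleton.2.2, rfl⟩

theorem exists_dense_mk_le_covPolish_mul_aleph0 :
    ∃ D : Set X, Dense D ∧ #D ≤ covPolish X * ℵ₀ := by
  obtain ⟨F, hF, hFX, hFc⟩ := exists_polish_cover_mk_eq_covPolish (X := X)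
  have : ∀ Y : F, ∃ c : Set X, c.Countable ∧ (Y : Set X) ⊆ closure c := fun Y ↦
    have := hF Y Y.2
    IsSeparable.of_subtype (Y : Set X)
  choose c hc hYc using this
  refine ⟨⋃ Y, c Y, fun x ↦ ?_, ?_⟩
  · obtain ⟨Y, hY, hxY⟩ := mem_sUnion.1 (hFX.symm ▸ mem_univ x)
    exact closure_mono (subset_iUnion c ⟨Y, hY⟩) (hYc ⟨Y, hY⟩ hxY)
  · refine (mk_iUnion_le c).trans (mul_le_mul' hFc.le (ciSup_le' fun Y ↦ ?_))
    exact (hc Y).le_aleph0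

theorem mk_le_covPolish_of_continuum_lt (h : 𝔠 < covPolish X) : #X ≤ covPolish X := by
  obtain ⟨F, hF, hFX, hFc⟩ := exists_polish_cover_mk_eq_covPolish (X := X)
  calc #X = #(⋃₀ F) := by rw [hFX, mk_univ]
    _ ≤ #F * ⨆ Y : F, #(Y : Set X) := mk_sUnion_le F
    _ ≤ covPolish X * 𝔠 :=
        mul_le_mul' hFc.le (ciSup_le' fun Y ↦ have := hF Y Y.2; PolishSpace.mk_le_continuum _)
    _ = covPolish X := mul_eq_left (aleph0_le_continuum.trans h.le) h.le continuum_ne_zero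

end Partition

section CompletelyMetrizable

variable {X : Type*} [TopologicalSpace X] [IsCompletelyMetrizableSpace X]

theorem parPolish_le_covPolish_of_separableSpace [SeparableSpace X] :
    parPolish X ≤ covPolish X := by
  cases isEmpty_or_nonempty X
  · exact parPolish_le_mk.trans ((mk_eq_zero X).trans_le zero_le)
  obtain ⟨F, -, hFX, hFc⟩ := exists_polish_cover_mk_eq_covPolish (X := X)
  have : PolishSpace (Set.univ : Set X) := isClosed_univ.polishSpace
  calc parPolish X ≤ #({Set.univ} : Set (Set X)) := parPolish_le isPolishPartition_singleton
    _ = 1 := mk_singleton _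
    _ ≤ covPolish X := hFc ▸ Cardinal.one_le_iff_ne_zero.2
        (mk_ne_zero_iff.2 (Nonempty.of_sUnion_eq_univ hFX).to_subtype)

theorem exists_isPolishPartition_of_subset_closure_of_mk_le_aleph_add_one {o : Ordinal}
    (ih : ∀ A D : Set X, IsGδ A → A ⊆ closure D → #D ≤ ℵ_ o →
      ∃ P, IsPolishPartition P A ∧ #P ≤ ℵ_ o)
    {A D : Set X} (hA : IsGδ A) (hAD : A ⊆ closure D) (hD : #D ≤ ℵ_ (o + 1)) :
    ∃ P, IsPolishPartition P A ∧ #P ≤ ℵ_ (o + 1) := by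
  let ι := (ℵ_ (o + 1)).ord.ToType
  have hι : #ι = ℵ_ (o + 1) := mk_ord_toType _
  obtain ⟨e, he⟩ : ∃ e : X → ι, InjOn e D := by
    have : Nonempty ι := mk_ne_zero_iff.1 (hι ▸ (aleph_pos _).ne')
    obtain ⟨f⟩ := (le_def _ _).1 (hι ▸ hD)
    exact exists_injOn_iff_injective.2 ⟨f, f.injective⟩
  let L i := A ∩ (closure {x ∈ D | e x < i} \ ⋃ j < i, closure {x ∈ D | e x < j})
  have hL : ∀ i, ∃ P, IsPolishPartition P (L i) ∧ #P ≤ ℵ_ o := fun i ↦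
    ih _ _ (hA.inter (isGδ_closure_sep_lt_diff D e i)) (fun x hx ↦ hx.2.1) <|
      calc #{x ∈ D | e x < i} = #(e '' {x ∈ D | e x < i}) :=
            (mk_image_eq_of_injOn _ _ (he.mono (sep_subset _ _))).symm
        _ ≤ #(Iio i) := mk_le_mk_of_subset (image_subset_iff.2 fun x hx ↦ hx.2)
        _ ≤ ℵ_ o := mk_Iio_toType_aleph_add_one_le i
  choose P hP hPc using hL
  have hLA : ⋃ i, L i = A := by
    rw [← inter_iUnion, iUnion_diff_biUnion_lt, inter_eq_left]
    exact hAD.trans (closure_subset_iUnion_closure_sep_lt D e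
      fun _ ↦ exists_forall_lt_of_countable_toType_aleph_add_one)
  have hLdisj : Pairwise (Function.onFun Disjoint L) := fun i j hij ↦
    (pairwise_disjoint_diff_biUnion_lt (fun j ↦ closure {x ∈ D | e x < j}) hij).mono
      inter_subset_right inter_subset_right
  refine ⟨⋃ i, P i, hLA ▸ hLdisj.isPolishPartition_iUnion hP, ?_⟩
  calc #(⋃ i, P i) ≤ #ι * ⨆ i, #(P i) := mk_iUnion_le P
    _ ≤ ℵ_ (o + 1) * ℵ_ o := mul_le_mul' hι.le (ciSup_le' hPc)
    _ = ℵ_ (o + 1) := mul_eq_left (aleph0_le_aleph _) (aleph_le_aleph.2 (Order.le_succ o))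
        (aleph_pos _).ne'

theorem exists_isPolishPartition_of_subset_closure (n : ℕ) {A D : Set X} (hA : IsGδ A)
    (hAD : A ⊆ closure D) (hD : #D ≤ ℵ_ n) : ∃ P, IsPolishPartition P A ∧ #P ≤ ℵ_ n := by
  induction n generalizing A D with
  | zero =>
    have hDc : D.Countable := le_aleph0_iff_set_countable.1 (by simpa using hD)
    have : PolishSpace A :=
      hA.polishSpace_of_isSeparable ((isSeparable_closure.2 hDc.isSeparable).mono hAD)
    exact ⟨{A}, isPolishPartition_singleton, by simp⟩
  | succ n ih =>
    rw [Nat.cast_succ] at hD ⊢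
    exact exists_isPolishPartition_of_subset_closure_of_mk_le_aleph_add_one
      (fun _ _ ↦ ih) hA hAD hD

end CompletelyMetrizable

/-- If `𝔠 < ℵ_{ω+1}`, then `cov(X) = par(X)` for every completely metrizable
space `X`. -/
theorem cov_eq_par_of_continuum_lt
    (hc : Cardinal.continuum.{0} < Cardinal.aleph (Ordinal.omega0 + 1)) :
    ∀ (X : Type) (_ : MetricSpace X) (_ : CompleteSpace X),
      covPolish X = parPolish X := by
  intro X _ _
  refine covPolish_le_parPolish.antisymm ?_
  have hcω : 𝔠 < ℵ_ ω :=
    (Order.lt_succ_iff.1 (succ_aleph _ ▸ hc)).lt_of_ne continuum_ne_aleph_omega0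
  obtain ⟨D, hD, hDc⟩ := exists_dense_mk_le_covPolish_mul_aleph0 (X := X)
  rcases le_or_gt (covPolish X) ℵ₀ with hℵ₀ | hℵ₀
  · have hDcount : D.Countable := le_aleph0_iff_set_countable.1 <|
      hDc.trans ((mul_le_mul' hℵ₀ le_rfl).trans_eq aleph0_mul_aleph0)
    have : SeparableSpace X := ⟨D, hDcount, hD⟩
    exact parPolish_le_covPolish_of_separableSpace
  rcases le_or_gt (covPolish X) 𝔠 with h𝔠 | h𝔠
  · obtain ⟨n, hn⟩ := exists_nat_eq_aleph_of_lt_aleph_omega0 hℵ₀.le (h𝔠.trans_lt hcω)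
    rw [mul_aleph0_eq hℵ₀.le, hn] at hDc
    obtain ⟨P, hP, hPc⟩ := exists_isPolishPartition_of_subset_closure n IsGδ.univ
      (fun x _ ↦ hD x) hDc
    exact hn ▸ (parPolish_le hP).trans hPc
  · exact parPolish_le_mk.trans (mk_le_covPolish_of_continuum_lt h𝔠)
end

section
/- If there is a skinny partition of (ω_ω)^ω into Polish subspaces, then there is a sparse cofinal family in ([ω_ω]^{ℵ₀}, ⊆). -/
/-!
The family is `{A_Y : Y ∈ P}` together with `∅`. Each `A_Y` is countable because `Y` is separable
and `A` is discrete. Every countable nonempty `t ⊆ A` is the range of a single sequence, which lies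
in some piece `Y`, so `t ⊆ A_Y`. Conversely `A_Y ⊆ t` means `Y ⊆ t^ω`, and `t^ω` is Polish as a
countable power of a countable discrete space, so by skinniness only countably many nonempty pieces
lie in it.
-/

open Cardinal Set TopologicalSpace

section SeqValues

variable {ι A : Type*}

def seqValues (Z : Set (ι → A)) : Set A := ⋃ x ∈ Z, range x

@[simp]
theorem seqValues_empty : seqValues (∅ : Set (ι → A)) = ∅ := by
  simp [seqValues]

theorem range_subset_seqValues {Z : Set (ι → A)} {x : ι → A} (hx : x ∈ Z) :
    range x ⊆ seqValues Z :=
  subset_biUnion_of_mem (u := fun x : ι → A => range x) hx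

theorem seqValues_subset_iff {Z : Set (ι → A)} {t : Set A} :
    seqValues Z ⊆ t ↔ Z ⊆ {x | ∀ i, x i ∈ t} := by
  simp only [seqValues, iUnion₂_subset_iff, range_subset_iff]
  rfl

variable [Countable ι] [TopologicalSpace A]

theorem TopologicalSpace.IsSeparable.countable_seqValues [DiscreteTopology A]
    {Z : Set (ι → A)} (hZ : IsSeparable Z) : (seqValues Z).Countable := by
  obtain ⟨c, hc, hZc⟩ := hZ
  refine (hc.biUnion fun y _ => countable_range y).mono ?_
  rintro a ⟨_, ⟨x, rfl⟩, ⟨_, ⟨hx, rfl⟩, i, rfl⟩⟩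
  obtain ⟨y, hyi, hyc⟩ := mem_closure_iff.1 (hZc hx) ((· i) ⁻¹' {x i})
    ((isOpen_discrete _).preimage (continuous_apply i)) rfl
  exact mem_biUnion hyc ⟨i, hyi⟩

theorem polishSpace_setOf_forall_mem (t : Set A) [PolishSpace t] :
    PolishSpace {x : ι → A | ∀ i, x i ∈ t} :=
  let e : {x : ι → A | ∀ i, x i ∈ t} ≃ₜ (ι → t) :=
    { Equiv.subtypePiEquivPi with
      continuous_toFun := continuous_pi fun i =>
        ((continuous_apply i).comp continuous_subtype_val).subtype_mk _
      continuous_invFun :=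
        (continuous_pi fun i => continuous_subtype_val.comp (continuous_apply i)).subtype_mk _ }
  e.isClosedEmbedding.polishSpace

end SeqValues

theorem sparse_cofinal_of_skinny_partition_general
    (A : Type) [TopologicalSpace A] [DiscreteTopology A]
    (P : Set (Set (ℕ → A)))
    (hcover : ⋃₀ P = Set.univ) (hPolish : ∀ Y ∈ P, PolishSpace Y)
    (hskinny : ∀ Y : Set (ℕ → A), PolishSpace Y →
      {Z ∈ P | (Z ∩ Y).Nonempty}.Countable) :
    ∃ F : Set (Set A), (∀ s ∈ F, s.Countable) ∧
      (∀ t : Set A, t.Countable → ∃ s ∈ F, t ⊆ s) ∧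
      (∀ t : Set A, t.Countable → {s ∈ F | s ⊆ t}.Countable) := by
  refine ⟨insert ∅ (seqValues '' P), ?_, ?_, ?_⟩
  · rintro s (rfl | ⟨Y, hY, rfl⟩)
    · exact countable_empty
    · have := hPolish Y hY
      exact (IsSeparable.of_subtype Y).countable_seqValues
  · intro t ht
    obtain rfl | hne := t.eq_empty_or_nonempty
    · exact ⟨∅, mem_insert _ _, subset_rfl⟩
    obtain ⟨x, rfl⟩ := ht.exists_eq_range hne
    obtain ⟨Y, hY, hxY⟩ := sUnion_eq_univ_iff.1 hcover x
    exact ⟨seqValues Y, mem_insert_of_mem _ (mem_image_of_mem _ hY), range_subset_seqValues hxY⟩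
  · intro t ht
    have : Countable t := ht.to_subtype
    have hmeet := hskinny _ (polishSpace_setOf_forall_mem (ι := ℕ) t)
    refine ((hmeet.image seqValues).insert ∅).mono ?_
    rintro s ⟨rfl | ⟨Y, hY, rfl⟩, hYt⟩
    · exact mem_insert _ _
    obtain rfl | ⟨x, hx⟩ := Y.eq_empty_or_nonempty
    · rw [seqValues_empty]
      exact mem_insert _ _
    · exact mem_insert_of_mem _ ⟨Y, ⟨hY, x, hx, seqValues_subset_iff.1 hYt hx⟩, rfl⟩

/-- If there is a skinny partition of `(ω_ω)^ω` into Polish subspaces, then there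
is a sparse cofinal family in `([ω_ω]^{ℵ₀}, ⊆)`. -/
theorem sparse_cofinal_of_skinny_partition
    (A : Type) [TopologicalSpace A] [DiscreteTopology A]
    (hA : #A = Cardinal.aleph Ordinal.omega0)
    (P : Set (Set (ℕ → A))) (hdisj : P.PairwiseDisjoint id)
    (hcover : ⋃₀ P = Set.univ) (hPolish : ∀ Y ∈ P, PolishSpace Y)
    (hskinny : ∀ Y : Set (ℕ → A), PolishSpace Y →
      {Z ∈ P | (Z ∩ Y).Nonempty}.Countable) :
    ∃ F : Set (Set A), (∀ s ∈ F, s.Countable) ∧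
      (∀ t : Set A, t.Countable → ∃ s ∈ F, t ⊆ s) ∧
      (∀ t : Set A, t.Countable → {s ∈ F | s ⊆ t}.Countable) :=
  sparse_cofinal_of_skinny_partition_general A P hcover hPolish hskinny
end

section
/- Let κ be an uncountable cardinal with cofinality ω, and let X be a complete metric space containing a closed subset that is not locally <κ-like. Then X contains a closed subspace homeomorphic to κ^ω (κ discrete, product topology). -/
open Cardinal Set TopologicalSpace

/-- A space is locally `<κ`-like if every nonempty open subset contains a nonempty
open subset of weight `< κ`. -/
def LocallyLtLike (Z : Type*) [TopologicalSpace Z] (κ : Cardinal) : Prop :=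
  ∀ U : Set Z, IsOpen U → U.Nonempty →
    ∃ V : Set Z, IsOpen V ∧ V.Nonempty ∧ V ⊆ U ∧ tweight V < κ

/-!
If `X` has a subset that is not locally `<κ`-like, then the closure of some open piece of it is
"locally rich": each of its nonempty relatively open parts contains uniformly separated sets of
every size `< κ` (a metric space of weight `≥ κ` has such sets, by a maximal-separated-net count).
As `cf κ = ω`, the index set `A` splits into countably many fibres of size `< κ`. In a closed rich
set `S` pick a separated sequence of anchors `xₖ`, and near `xₖ` a separated set indexed by the
`k`-th fibre; small closed balls around these points, intersected with `S`, form a discrete family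
`(C a)_{a ∈ A}` of small closed rich sets. Iterating gives a Cantor scheme on `A` whose branch
limits (completeness) define a continuous map `A^ℕ → X`; discreteness at every level makes each
coordinate locally determined by the image point, which forces the map to be a closed embedding.
-/

open Metric Topology Filter PiNat

universe u

section DiscreteFamily

variable {X ι κ : Type*} [TopologicalSpace X]

def IsDiscreteFamily (C : ι → Set X) : Prop :=
  ∀ z, ∃ U ∈ 𝓝 z, {i | (C i ∩ U).Nonempty}.Subsingleton

lemma IsDiscreteFamily.mono {C D : ι → Set X} (hD : IsDiscreteFamily D) (hCD : ∀ i, C i ⊆ D i) :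
    IsDiscreteFamily C := fun z =>
  let ⟨U, hU, hDU⟩ := hD z
  ⟨U, hU, hDU.anti fun i hi => hi.mono (inter_subset_inter_left U (hCD i))⟩

lemma IsDiscreteFamily.of_fibers {C : ι → Set X} {D : κ → Set X} (p : ι → κ)
    (hD : IsDiscreteFamily D) (hCD : ∀ i, C i ⊆ D (p i))
    (hfib : ∀ k, IsDiscreteFamily fun i : p ⁻¹' {k} => C i) : IsDiscreteFamily C := by
  intro z
  obtain ⟨U₁, hU₁, hD₁⟩ := hD z
  by_cases h : ∃ i, (C i ∩ U₁).Nonempty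
  · obtain ⟨i₀, hi₀⟩ := h
    obtain ⟨U₂, hU₂, hC₂⟩ := hfib (p i₀) z
    have hp : ∀ i, (C i ∩ (U₁ ∩ U₂)).Nonempty → p i = p i₀ := fun i hi =>
      hD₁ (hi.mono (inter_subset_inter (hCD i) inter_subset_left))
        (hi₀.mono (inter_subset_inter_left _ (hCD i₀)))
    refine ⟨U₁ ∩ U₂, inter_mem hU₁ hU₂, fun i hi j hj => ?_⟩
    have hij := @hC₂ ⟨i, hp i hi⟩ (hi.mono (inter_subset_inter_right _ inter_subset_right))
      ⟨j, hp j hj⟩ (hj.mono (inter_subset_inter_right _ inter_subset_right))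
    exact congrArg Subtype.val hij
  · exact ⟨U₁, hU₁, fun i hi => (h ⟨i, hi⟩).elim⟩

end DiscreteFamily

lemma isDiscreteFamily_ball {ι X : Type*} [PseudoMetricSpace X] {x : ι → X} {δ : ℝ} (hδ : 0 < δ)
    (hx : Pairwise fun i j => δ ≤ dist (x i) (x j)) :
    IsDiscreteFamily fun i => ball (x i) (δ / 4) := by
  refine fun z => ⟨ball z (δ / 4), ball_mem_nhds z (by positivity), ?_⟩
  rintro i ⟨u, hui, huz⟩ j ⟨v, hvj, hvz⟩
  by_contra hij
  rw [mem_ball] at hui huz hvj hvz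
  have := hx hij
  have := dist_triangle4 (x i) u z v
  have := dist_triangle (x i) v (x j)
  rw [dist_comm] at hui hvz
  linarith

section ClosedEmbedding

variable {ι X : Type*} {A : ι → Type*} [∀ i, TopologicalSpace (A i)] [∀ i, DiscreteTopology (A i)]

lemma le_nhds_of_forall_eventually_apply_eq {F : Filter (∀ i, A i)} {x : ∀ i, A i}
    (h : ∀ i, ∀ᶠ y in F, y i = x i) : F ≤ 𝓝 x := by
  rw [nhds_pi, le_pi]
  intro i
  rw [nhds_discrete, tendsto_pure]
  exact h i

theorem isClosedEmbedding_of_locally_determined_coords [TopologicalSpace X] [T2Space X]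
    {f : (∀ i, A i) → X} (hf : Continuous f)
    (h : ∀ z i, ∃ U ∈ 𝓝 z, ∀ x y, f x ∈ U → f y ∈ U → x i = y i) : IsClosedEmbedding f := by
  have hcoords : ∀ x, ∀ i, ∀ᶠ y in comap f (𝓝 (f x)), y i = x i := fun x i =>
    let ⟨U, hU, hUi⟩ := h (f x) i
    mem_comap.2 ⟨U, hU, fun y hy => hUi y x hy (mem_of_mem_nhds hU)⟩
  have hinj : Function.Injective f := fun x y hxy => funext fun i =>
    let ⟨U, hU, hUi⟩ := h (f x) i
    hUi x y (mem_of_mem_nhds hU) (hxy ▸ mem_of_mem_nhds hU)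
  have hind : IsInducing f := isInducing_iff_nhds.2 fun x =>
    le_antisymm (hf.tendsto x).le_comap (le_nhds_of_forall_eventually_apply_eq (hcoords x))
  refine ⟨⟨hind, hinj⟩, isClosed_of_closure_subset fun z hz => ?_⟩
  have hF : (comap f (𝓝 z)).NeBot := by
    refine comap_neBot_iff.2 fun t ht => ?_
    obtain ⟨_, hxt, x, rfl⟩ := mem_closure_iff_nhds.1 hz t ht
    exact ⟨x, hxt⟩
  choose U hU hUi using h z
  choose y hy using fun i => (hF.nonempty_of_mem (preimage_mem_comap (hU i)))
  have hlim : comap f (𝓝 z) ≤ 𝓝 (fun i => y i i) := le_nhds_of_forall_eventually_apply_eq fun i =>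
    mem_comap.2 ⟨U i, hU i, fun w hw => hUi i w (y i) hw (hy i)⟩
  exact ⟨_, tendsto_nhds_unique ((hf.tendsto _).mono_left hlim) tendsto_comap⟩

end ClosedEmbedding

namespace CantorScheme

variable {X A : Type*} {V : List A → Set X}

lemma isDiscreteFamily_level [TopologicalSpace X] (hanti : CantorScheme.Antitone V)
    (hdisc : ∀ s, IsDiscreteFamily fun a => V (a :: s)) (n : ℕ) :
    IsDiscreteFamily fun s : {s : List A // s.length = n} => V s := by
  induction n with
  | zero =>
    refine fun z => ⟨univ, univ_mem, fun s _ t _ => Subtype.ext ?_⟩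
    rw [List.length_eq_zero_iff.1 s.2, List.length_eq_zero_iff.1 t.2]
  | succ n ih =>
    intro z
    obtain ⟨U₁, hU₁, hV₁⟩ := ih z
    by_cases h : ∃ s : {s : List A // s.length = n}, (V s ∩ U₁).Nonempty
    · obtain ⟨s₀, hs₀⟩ := h
      obtain ⟨U₂, hU₂, hV₂⟩ := hdisc s₀ z
      have htail : ∀ a s (hs : (a :: s).length = n + 1), (V (a :: s) ∩ (U₁ ∩ U₂)).Nonempty →
          s = s₀ ∧ (V (a :: s₀) ∩ U₂).Nonempty := by
        intro a s hs ha
        have : (⟨s, Nat.succ_injective hs⟩ : {s : List A // s.length = n}) = s₀ :=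
          hV₁ (ha.mono (inter_subset_inter (hanti s a) inter_subset_left)) hs₀
        subst this
        exact ⟨rfl, ha.mono (inter_subset_inter_right _ inter_subset_right)⟩
      refine ⟨U₁ ∩ U₂, inter_mem hU₁ hU₂, ?_⟩
      rintro ⟨_ | ⟨a, s⟩, hs⟩ ha ⟨_ | ⟨b, t⟩, ht⟩ hb
      · exact absurd hs (by simp)
      · exact absurd hs (by simp)
      · exact absurd ht (by simp)
      obtain ⟨rfl, ha'⟩ := htail a s hs ha
      obtain ⟨rfl, hb'⟩ := htail b t ht hb
      obtain rfl : a = b := hV₂ ha' hb'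
      rfl
    · refine ⟨U₁, hU₁, ?_⟩
      rintro ⟨_ | ⟨a, s⟩, hs⟩ ha
      · exact absurd hs (by simp)
      · exact (h ⟨⟨s, Nat.succ_injective hs⟩,
          ha.mono (inter_subset_inter_left _ (hanti s a))⟩).elim

theorem exists_isClosedEmbedding [MetricSpace X] [CompleteSpace X] [TopologicalSpace A]
    [DiscreteTopology A] (hclosed : ∀ s, IsClosed (V s)) (hne : ∀ s, (V s).Nonempty)
    (hanti : CantorScheme.Antitone V) (hdiam : VanishingDiam V)
    (hdisc : ∀ s, IsDiscreteFamily fun a => V (a :: s)) :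
    ∃ f : (ℕ → A) → X, IsClosedEmbedding f := by
  have hdom := (hanti.closureAntitone hclosed).map_of_vanishingDiam hdiam hne
  let f : (ℕ → A) → X := fun x => (inducedMap V).2 ⟨x, hdom.symm ▸ mem_univ x⟩
  have hf : ∀ x n, f x ∈ V (res x n) := fun x => map_mem _
  refine ⟨f, isClosedEmbedding_of_locally_determined_coords
    (hdiam.map_continuous.comp (continuous_id.subtype_mk _)) fun z i => ?_⟩
  obtain ⟨U, hU, hVU⟩ := isDiscreteFamily_level hanti hdisc (i + 1) z
  refine ⟨U, hU, fun x y hx hy => ?_⟩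
  have := @hVU ⟨res x (i + 1), res_length x _⟩ ⟨f x, hf x _, hx⟩
    ⟨res y (i + 1), res_length y _⟩ ⟨f y, hf y _, hy⟩
  simp only [Subtype.mk.injEq, res_succ, List.cons.injEq] at this
  exact this.1

def ofSplitting (S₀ : Set X) (C : Set X → ℕ → A → Set X) : List A → Set X
  | [] => S₀
  | a :: s => C (ofSplitting S₀ C s) s.length a

end CantorScheme

theorem exists_isClosedEmbedding_of_forall_split {X A : Type*} [MetricSpace X] [CompleteSpace X]
    [TopologicalSpace A] [DiscreteTopology A] (P : Set X → Prop)
    (hP : ∀ S, P S → IsClosed S ∧ S.Nonempty)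
    (split : ∀ S, P S → ∀ ε > 0, ∃ C : A → Set X,
      (∀ a, C a ⊆ S ∧ P (C a) ∧ ediam (C a) ≤ ENNReal.ofReal ε) ∧ IsDiscreteFamily C)
    {S₀ : Set X} (h₀ : P S₀) : ∃ f : (ℕ → A) → X, IsClosedEmbedding f := by
  -- stated for every `S`, so that `choose` yields a splitting rule defined on all sets
  have split' : ∀ (S : Set X) (n : ℕ), ∃ C : A → Set X, P S →
      (∀ a, C a ⊆ S ∧ P (C a) ∧ ediam (C a) ≤ ENNReal.ofReal (1 / (n + 1))) ∧
        IsDiscreteFamily C := by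
    intro S n
    by_cases hS : P S
    · obtain ⟨C, hC⟩ := split S hS _ Nat.one_div_pos_of_nat
      exact ⟨C, fun _ => hC⟩
    · exact ⟨fun _ => ∅, fun h => absurd h hS⟩
  choose C hC using split'
  let V := CantorScheme.ofSplitting S₀ C
  have hV : ∀ s, P (V s) := by
    intro s
    induction s with
    | nil => exact h₀
    | cons a s ih => exact ((hC _ s.length ih).1 a).2.1
  have hchild (s : List A) := hC (V s) s.length (hV s)
  refine CantorScheme.exists_isClosedEmbedding (V := V) (fun s => (hP _ (hV s)).1)
    (fun s => (hP _ (hV s)).2) (fun s a => ((hchild s).1 a).1) (fun x => ?_) fun s => (hchild s).2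
  rw [← tendsto_add_atTop_iff_nat 1]
  have hlim : Tendsto (fun n : ℕ => ENNReal.ofReal (1 / (n + 1))) atTop (𝓝 0) := by
    simpa using ENNReal.tendsto_ofReal tendsto_one_div_add_atTop_nhds_zero_nat
  refine tendsto_of_tendsto_of_tendsto_of_le_of_le tendsto_const_nhds hlim (fun _ => zero_le)
    fun n => ?_
  refine le_of_le_of_eq ((hchild (res x n)).1 (x n)).2.2 ?_
  rw [res_length]

section Weight

variable {Y : Type*} [MetricSpace Y]

lemma exists_maximal_separated {δ : ℝ} (hδ : 0 < δ) :
    ∃ D : Set Y, D.Pairwise (fun a b => δ ≤ dist a b) ∧ ∀ y, ∃ d ∈ D, dist y d < δ := by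
  obtain ⟨D, hD⟩ := zorn_subset {T : Set Y | T.Pairwise fun a b => δ ≤ dist a b}
    fun c hc hchain => ⟨⋃₀ c, (pairwise_sUnion hchain.directedOn).2 hc,
      fun _ => subset_sUnion_of_mem⟩
  refine ⟨D, hD.prop, fun y => ?_⟩
  by_contra! hy
  have hyD : y ∈ D := hD.mem_of_prop_insert <|
    hD.prop.insert fun d hd _ => ⟨hy d hd, dist_comm y d ▸ hy d hd⟩
  exact (hy y hyD).not_gt (by simpa using hδ)

lemma tweight_le_of_forall_separated_card_le {l : Cardinal} (hl : ℵ₀ ≤ l)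
    (h : ∀ δ > 0, ∀ T : Set Y, T.Pairwise (fun a b => δ ≤ dist a b) → #T ≤ l) :
    tweight Y ≤ l := by
  choose D hDsep hDnet using fun n : ℕ =>
    exists_maximal_separated (Y := Y) (Nat.one_div_pos_of_nat (n := n))
  let B : Set (Set Y) := range fun p : Σ n, D n => ball (p.2 : Y) (1 / (p.1 + 1))
  have hB : IsTopologicalBasis B := by
    refine isTopologicalBasis_of_isOpen_of_nhds (by rintro _ ⟨p, rfl⟩; exact isOpen_ball)
      fun a u ha hu => ?_
    obtain ⟨ε, hε, hball⟩ := Metric.isOpen_iff.1 hu a ha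
    obtain ⟨n, hn⟩ := exists_nat_one_div_lt (half_pos hε)
    obtain ⟨d, hd, had⟩ := hDnet n a
    refine ⟨_, ⟨(⟨n, d, hd⟩ : Σ n, D n), rfl⟩, had, (ball_subset_ball' ?_).trans hball⟩
    rw [dist_comm]
    linarith
  have hcard : #B ≤ l := calc
    #B ≤ #(Σ n, D n) := mk_range_le
    _ = sum fun n => #(D n) := mk_sigma _
    _ ≤ sum fun _ : ℕ => l := sum_le_sum _ _ fun n => h _ Nat.one_div_pos_of_nat _ (hDsep n)
    _ = l := by simp [sum_const, aleph0_mul_eq hl]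
  exact (csInf_le' (s := {c | ∃ B : Set (Set Y), IsTopologicalBasis B ∧ #B = c})
    ⟨B, hB, rfl⟩).trans hcard

lemma exists_separated_of_lt_tweight {l : Cardinal} (hl : l < tweight Y) (hY : ℵ₀ < tweight Y) :
    ∃ δ > 0, ∃ T : Set Y, T.Pairwise (fun a b => δ ≤ dist a b) ∧ l ≤ #T := by
  by_contra! h
  exact (max_lt hl hY).not_ge <| tweight_le_of_forall_separated_card_le (le_max_right l ℵ₀)
    fun δ hδ T hT => (h δ hδ T hT).le.trans (le_max_left _ _)

end Weight

lemma exists_nat_fibers_lt {A : Type*} {κ : Cardinal} (hA : #A = κ) (hκ : ℵ₀ ≤ κ)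
    (hcf : κ.ord.cof = ℵ₀) : ∃ g : A → ℕ, ∀ k, #(g ⁻¹' {k}) < κ := by
  subst hA
  have := Cardinal.noMaxOrder hκ
  obtain ⟨s, hs, hcard⟩ := Order.exists_cof_eq (#A).ord.ToType
  rw [Ordinal.cof_toType, hcf] at hcard
  have hsne : s.Nonempty := by
    rw [← nonempty_coe_sort, ← mk_ne_zero_iff, hcard]
    exact aleph0_ne_zero
  obtain ⟨b, rfl⟩ := (countable_coe_iff.1 (mk_le_aleph0_iff.1 hcard.le)).exists_eq_range hsne
  obtain ⟨e⟩ : Nonempty (A ≃ (#A).ord.ToType) := by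
    rw [← Cardinal.eq, mk_toType, card_ord]
  have hcof : ∀ a, ∃ k, e a < b k := fun a => by
    obtain ⟨c, hc⟩ := exists_gt (e a)
    obtain ⟨_, ⟨k, rfl⟩, hk⟩ := hs c
    exact ⟨k, hc.trans_le hk⟩
  choose g hg using hcof
  refine ⟨g, fun k => ?_⟩
  calc #(g ⁻¹' {k}) ≤ #(e ⁻¹' Iio (b k)) := mk_le_mk_of_subset fun a ha => by
        rw [mem_preimage, mem_singleton_iff] at ha
        exact ha ▸ hg a
    _ = #(Iio (b k)) := mk_preimage_equiv _ _
    _ < #A := by simpa using mk_Iio_lt (b k) (by simp)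

section LocallyRich

variable {X : Type u} [MetricSpace X] {κ : Cardinal} {S : Set X}

/-- A metric stand-in for "nowhere locally `<κ`-like", stable under the operations of the
construction (closure, intersection with open sets). -/
def IsLocallyRich (κ : Cardinal) (S : Set X) : Prop :=
  ∀ W : Set X, IsOpen W → (S ∩ W).Nonempty → ∀ l < κ,
    ∃ δ > 0, ∃ T ⊆ S ∩ W, l ≤ #T ∧ T.Pairwise fun a b => δ ≤ dist a b

lemma IsLocallyRich.closure (h : IsLocallyRich κ S) : IsLocallyRich κ (closure S) := by
  intro W hW hSW l hl
  obtain ⟨δ, hδ, T, hT, hlT, hTsep⟩ := h W hW ((closure_inter_open_nonempty_iff hW).1 hSW) l hl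
  exact ⟨δ, hδ, T, hT.trans (inter_subset_inter_left W subset_closure), hlT, hTsep⟩

lemma IsLocallyRich.inter_isOpen (h : IsLocallyRich κ S) {O : Set X} (hO : IsOpen O) :
    IsLocallyRich κ (S ∩ O) := by
  intro W hW hSW l hl
  obtain ⟨δ, hδ, T, hT, hlT, hTsep⟩ := h (O ∩ W) (hO.inter hW) (by rwa [← inter_assoc]) l hl
  exact ⟨δ, hδ, T, by rwa [inter_assoc], hlT, hTsep⟩

lemma exists_isLocallyRich_of_not_locallyLtLike (hκ : ℵ₀ < κ) {K : Set X}
    (h : ¬ LocallyLtLike K κ) : ∃ S : Set X, IsClosed S ∧ S.Nonempty ∧ IsLocallyRich κ S := by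
  simp only [LocallyLtLike, not_forall, not_exists, not_and, not_lt] at h
  obtain ⟨U, hU, hUne, hUw⟩ := h
  refine ⟨closure (Subtype.val '' U), isClosed_closure, (hUne.image _).mono subset_closure,
    IsLocallyRich.closure ?_⟩
  rintro W hW ⟨_, ⟨p, hpU, rfl⟩, hpW⟩ l hl
  let V : Set K := U ∩ (↑) ⁻¹' W
  have hwV : κ ≤ tweight V :=
    hUw V (hU.inter (hW.preimage continuous_subtype_val)) ⟨p, hpU, hpW⟩ inter_subset_left
  obtain ⟨δ, hδ, T, hTsep, hlT⟩ :=
    exists_separated_of_lt_tweight (hl.trans_le hwV) (hκ.trans_le hwV)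
  have hι : Isometry fun v : V => (v : X) := isometry_subtype_coe.comp isometry_subtype_coe
  refine ⟨δ, hδ, (fun v : V => (v : X)) '' T, ?_, by rwa [mk_image_eq hι.injective], ?_⟩
  · rintro _ ⟨v, -, rfl⟩
    exact ⟨⟨v, v.2.1, rfl⟩, v.2.2⟩
  · rintro _ ⟨u, hu, rfl⟩ _ ⟨v, hv, rfl⟩ huv
    rw [hι.dist_eq]
    exact hTsep hu hv (hι.injective.ne_iff.1 huv)

lemma IsLocallyRich.exists_separated_seq (h : IsLocallyRich κ S) (hκ : ℵ₀ < κ) (hS : S.Nonempty) :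
    ∃ δ > 0, ∃ x : ℕ → X, (∀ k, x k ∈ S) ∧ Pairwise fun i j => δ ≤ dist (x i) (x j) := by
  obtain ⟨δ, hδ, T, hTS, hT, hTsep⟩ := h univ isOpen_univ (by simpa using hS) ℵ₀ hκ
  have : Infinite T := infinite_iff.2 hT
  let e := Infinite.natEmbedding T
  exact ⟨δ, hδ, fun k => e k, fun k => (hTS (e k).2).1,
    fun i j hij => hTsep (e i).2 (e j).2 fun h => hij (e.injective (Subtype.ext h))⟩

lemma IsLocallyRich.exists_clusters {A : Type u} (h : IsLocallyRich κ S) {g : A → ℕ}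
    (hg : ∀ k, #(g ⁻¹' {k}) < κ) {x : ℕ → X} (hx : ∀ k, x k ∈ S) {r : ℝ} (hr : 0 < r) :
    ∃ y : A → X, ∃ δ : ℕ → ℝ, (∀ k, 0 < δ k) ∧ (∀ a, y a ∈ S ∧ dist (y a) (x (g a)) < r) ∧
      ∀ k, Pairwise fun a b : g ⁻¹' {k} => δ k ≤ dist (y a) (y b) := by
  choose δ hδ T hTS hT hTsep using fun k =>
    h (ball (x k) r) isOpen_ball ⟨x k, hx k, mem_ball_self hr⟩ _ (hg k)
  have e (k : ℕ) : g ⁻¹' {k} ↪ T k := ((le_def _ _).1 (hT k)).some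
  let y (a : A) : X := e (g a) ⟨a, rfl⟩
  have hy (k : ℕ) (a : g ⁻¹' {k}) : y a = e k a := by
    obtain ⟨a, ha⟩ := a
    obtain rfl : g a = k := ha
    rfl
  refine ⟨y, δ, hδ, fun a => hTS _ (e _ _).2, fun k a b hab => ?_⟩
  show δ k ≤ dist (y a) (y b)
  rw [hy, hy]
  exact hTsep k (e k a).2 (e k b).2 fun h => hab ((e k).injective (Subtype.ext h))

lemma IsLocallyRich.exists_discrete_split {A : Type u} (h : IsLocallyRich κ S) (hκ : ℵ₀ < κ)
    (hS : IsClosed S) (hne : S.Nonempty) {g : A → ℕ} (hg : ∀ k, #(g ⁻¹' {k}) < κ) {ε : ℝ}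
    (hε : 0 < ε) :
    ∃ C : A → Set X, (∀ a, C a ⊆ S ∧ (IsClosed (C a) ∧ (C a).Nonempty ∧ IsLocallyRich κ (C a)) ∧
      ediam (C a) ≤ ENNReal.ofReal ε) ∧ IsDiscreteFamily C := by
  obtain ⟨δ₀, hδ₀, x, hxS, hxsep⟩ := h.exists_separated_seq hκ hne
  obtain ⟨y, δ, hδ, hy, hysep⟩ := h.exists_clusters hg hxS (r := δ₀ / 8) (by positivity)
  -- `ρ ≤ δ₀ / 8` keeps `C a` inside the ball of radius `δ₀ / 4` about its anchor `x (g a)`, and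
  -- `ρ ≤ δ k / 8` inside the ball of radius `δ k / 4` about `y a`: discreteness at both scales
  let ρ (k : ℕ) : ℝ := min (δ k) (min δ₀ ε) / 8
  have hρ (k : ℕ) : 0 < ρ k ∧ ρ k ≤ δ k / 8 ∧ ρ k ≤ δ₀ / 8 ∧ ρ k ≤ ε / 8 := by
    have := hδ k
    simp only [ρ]
    refine ⟨by positivity, ?_, ?_, ?_⟩ <;> gcongr <;> simp
  let C (a : A) : Set X := _root_.closure (S ∩ ball (y a) (ρ (g a)))
  have hC (a : A) : C a ⊆ closedBall (y a) (ρ (g a)) :=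
    (closure_mono inter_subset_right).trans closure_ball_subset_closedBall
  refine ⟨C, fun a => ⟨closure_minimal inter_subset_left hS, ⟨isClosed_closure,
    ⟨y a, subset_closure ⟨(hy a).1, mem_ball_self (hρ (g a)).1⟩⟩,
    (h.inter_isOpen isOpen_ball).closure⟩, ?_⟩, ?_⟩
  · refine ediam_le_of_forall_dist_le fun u hu v hv => ?_
    have := dist_triangle_right u v (y a)
    have := mem_closedBall.1 (hC a hu)
    have := mem_closedBall.1 (hC a hv)
    linarith [(hρ (g a)).2.2.2]
  · refine (isDiscreteFamily_ball hδ₀ hxsep).of_fibers g (fun a => (hC a).trans ?_) fun k =>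
      (isDiscreteFamily_ball (hδ k) (hysep k)).mono fun a => (hC a).trans ?_
    · refine closedBall_subset_ball' ?_
      linarith [(hy a).2, (hρ (g a)).2.2.1]
    · obtain ⟨a, rfl⟩ := a
      refine closedBall_subset_ball ?_
      linarith [(hρ (g a)).2.1, hδ (g a)]

end LocallyRich

theorem closed_copy_of_kappa_omega_general (κ : Cardinal) (hκ : ℵ₀ < κ)
    (hcf : κ.ord.cof = ℵ₀) (A : Type) [TopologicalSpace A] [DiscreteTopology A]
    (hA : #A = κ) (X : Type) [MetricSpace X] [CompleteSpace X]
    (K : Set X) (hnot : ¬ LocallyLtLike K κ) :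
    ∃ Z : Set X, IsClosed Z ∧ Nonempty (Z ≃ₜ (ℕ → A)) := by
  obtain ⟨g, hg⟩ := exists_nat_fibers_lt hA hκ.le hcf
  obtain ⟨S₀, hS₀⟩ := exists_isLocallyRich_of_not_locallyLtLike hκ hnot
  obtain ⟨f, hf⟩ := exists_isClosedEmbedding_of_forall_split (A := A)
    (fun S => IsClosed S ∧ S.Nonempty ∧ IsLocallyRich κ S) (fun S hS => ⟨hS.1, hS.2.1⟩)
    (fun S ⟨hS, hne, hrich⟩ ε hε => hrich.exists_discrete_split hκ hS hne hg hε) hS₀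
  exact ⟨range f, hf.isClosed_range, ⟨hf.isEmbedding.toHomeomorph.symm⟩⟩

/-- If `κ` is uncountable of cofinality `ω` and a completely metrizable space `X`
has a closed subset which is not locally `<κ`-like, then `X` contains a closed
subspace homeomorphic to `κ^ω`. -/
theorem closed_copy_of_kappa_omega (κ : Cardinal) (hκ : ℵ₀ < κ)
    (hcf : κ.ord.cof = ℵ₀) (A : Type) [TopologicalSpace A] [DiscreteTopology A]
    (hA : #A = κ) (X : Type) [MetricSpace X] [CompleteSpace X]
    (K : Set X) (hK : IsClosed K) (hnot : ¬ LocallyLtLike K κ) :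
    ∃ Z : Set X, IsClosed Z ∧ Nonempty (Z ≃ₜ (ℕ → A)) :=
  closed_copy_of_kappa_omega_general κ hκ hcf A hA X K hnot
end
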